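/- arXiv:2511.22159 — 7 statements merged into one kernel-verified Lean document; each statement's English description precedes it below -/
import Mathlib

section
/- Let η_i > 0, φ_i ∈ [0,1], α_i, α_j > 0, δ = α_i + α_j, and let s_i, s_j, e_i, e_j, τ_i, τ_j, π_i be real numbers. Define Q_i^exp = (α_i + (s_i - s_j) + (e_i + φ_i·η_i·π_i) - τ_j)/δ and Q_j^exp = (α_j + (s_j - s_i) + e_j - (τ_i + π_i))/δ. If the binding certificate-market condition η_i·Q_i^exp = Q_j^exp holds, then π_i = (α_j - η_i·α_i + (1+η_i)(s_j - s_i) + (e_j - η_i·e_i) + (η_i·τ_j - τ_i)) / (1 + φ_i·η_i²). -/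
/-- Certificate price in a binding TIC equilibrium (Lemma 1). -/
theorem stmt_1 (ηi φi αi αj δ si sj ei ej τi τj πi Qiexp Qjexp : ℝ)
    (hη : 0 < ηi) (hφ0 : 0 ≤ φi) (hφ1 : φi ≤ 1)
    (hαi : 0 < αi) (hαj : 0 < αj) (hδ : δ = αi + αj)
    (hQi : Qiexp = (αi + (si - sj) + (ei + φi * ηi * πi) - τj) / δ)
    (hQj : Qjexp = (αj + (sj - si) + ej - (τi + πi)) / δ)
    (hbind : ηi * Qiexp = Qjexp) :
    πi = (αj - ηi * αi + (1 + ηi) * (sj - si) + (ej - ηi * ei) + (ηi * τj - τi))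
          / (1 + φi * ηi ^ 2) := by
  subst hδ
  have hδ0 : αi + αj ≠ 0 := by positivity
  have hden : (1 : ℝ) + φi * ηi ^ 2 ≠ 0 := by positivity
  subst hQi hQj
  field_simp at hbind ⊢
  nlinarith [hbind]
end

section
/- Let α_A, α_B > 0, δ = α_A + α_B, Q_A^o = α_A/δ, γ_B > 0, and X̄_A ∈ (2Q_A^o, 1). Define the candidate Nash-equilibrium instruments τ_B* = γ_B, e_B* = 0, τ_A* = -α_A + (2/3)·δ·X̄_A + (1/3)·γ_B, e_A* = -α_A + (1/3)·δ·X̄_A + (2/3)·γ_B, and the interior quantities Q_A^dom = Q_A^o + (τ_A* - e_B*)/δ and Q_A^exp = Q_A^o + (e_A* - τ_B*)/δ. Then: (i) total production X_A = Q_A^dom + Q_A^exp equals X̄_A; (ii) the cost-minimizing split condition 2·e_A* = τ_A* + τ_B* - δ·Q_A^o holds; (iii) τ_A* - e_A* = (δ·X̄_A - γ_B)/3; and (iv) (τ_A* + τ_B*) - (e_A* + e_B*) = (δ·X̄_A + 2γ_B)/3 > 0, so that Q_A^dom - Q_A^exp = (δ·X̄_A + 2γ_B)/(3δ) > 0 and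 the outcome is not conditionally efficient. -/
/-- Properties of the candidate Nash equilibrium instruments without a TIC scheme
(Proposition 5). -/
theorem stmt_5 (αA αB δ QAo γB XbarA τBs eBs τAs eAs QAdom QAexp : ℝ)
    (hA : 0 < αA) (hB : 0 < αB) (hδ : δ = αA + αB) (hQAo : QAo = αA / δ)
    (hγ : 0 < γB) (hXlo : 2 * QAo < XbarA) (hXhi : XbarA < 1)
    (hτB : τBs = γB) (heB : eBs = 0)
    (hτA : τAs = -αA + (2 / 3) * δ * XbarA + (1 / 3) * γB)
    (heA : eAs = -αA + (1 / 3) * δ * XbarA + (2 / 3) * γB)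
    (hQdom : QAdom = QAo + (τAs - eBs) / δ)
    (hQexp : QAexp = QAo + (eAs - τBs) / δ) :
    QAdom + QAexp = XbarA ∧
    2 * eAs = τAs + τBs - δ * QAo ∧
    τAs - eAs = (δ * XbarA - γB) / 3 ∧
    (τAs + τBs) - (eAs + eBs) = (δ * XbarA + 2 * γB) / 3 ∧
    0 < (δ * XbarA + 2 * γB) / 3 ∧
    QAdom - QAexp = (δ * XbarA + 2 * γB) / (3 * δ) ∧
    0 < QAdom - QAexp := by
  have hδ0 : 0 < δ := by rw [hδ]; linarith
  have hδne : δ ≠ 0 := ne_of_gt hδ0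
  have hQ : δ * QAo = αA := by rw [hQAo]; field_simp
  have hX : 0 < XbarA := by
    have : 0 < QAo := by rw [hQAo]; positivity
    linarith
  have hpos : 0 < (δ * XbarA + 2 * γB) / 3 := by positivity
  refine ⟨?_, ?_, ?_, ?_, hpos, ?_, ?_⟩
  · subst hQdom hQexp hτA heA hτB heB; field_simp; linarith [hQ]
  · subst hτA heA hτB heB; linarith [hQ]
  · subst hτA heA; ring
  · subst hτA heA hτB heB; ring
  · subst hQdom hQexp hτA heA hτB heB; field_simp; ring
  · subst hQdom hQexp hτA heA hτB heB
    have heq : ∀ x y : ℝ, QAo + ((-αA + 2 / 3 * δ * x + 1 / 3 * y) - 0) / δ -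
        (QAo + ((-αA + 1 / 3 * δ * x + 2 / 3 * y) - y) / δ)
        = (δ * x + 2 * y) / (3 * δ) := by intro x y; field_simp; ring
    rw [heq]; positivity
end

section
/- Let α_A, α_B > 0, δ = α_A + α_B, Q_A^o = α_A/δ, X_A^o = 2Q_A^o, and let X̄_A satisfy X_A^o < X̄_A < 1. Set η_A = (2 - X̄_A)/X̄_A and π_A = δ·(1 - (1 + η_A)·Q_A^o)/(1 + η_A). Then: (i) η_A > 1; (ii) π_A = (δ/2)·X̄_A - α_A > 0; (iii) π_A = α_A·(X̄_A - X_A^o)/X_A^o; (iv) with φ_A·η_A = 1 the quantities Q_A^dom = Q_A^exp = Q_A^o + π_A/δ = X̄_A/2, so total production X_A = 2Q_A^o + 2π_A/δ equals X̄_A; and (v) the binding certificate condition η_A·(Q_A^o + π_A/δ) = 1 - Q_A^o - π_A/δ holds. -/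
/-!
The credit factor `η = (2 - X̄)/X̄` is chosen so that `1 + η = 2/X̄`. Substituting this into the
price formula collapses it to `π = δ X̄/2 - α`, so that each of A's two sales quantities
`Q^o + π/δ` equals `X̄/2`; the certificate balance `η · X̄/2 = 1 - X̄/2` is then immediate, and
positivity of `π` is the hypothesis `X^o = 2α/δ < X̄`.
-/

section CertificateScheme

variable {δ α X : ℝ}

lemma one_add_creditFactor (hX : X ≠ 0) : 1 + (2 - X) / X = 2 / X := by
  field_simp
  ring

lemma one_lt_creditFactor (hX₀ : 0 < X) (hX₁ : X < 1) : 1 < (2 - X) / X := by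
  rw [lt_div_iff₀ hX₀]
  linarith

lemma certificatePrice_eq (hδ : δ ≠ 0) (hX : X ≠ 0) :
    δ * (1 - (1 + (2 - X) / X) * (α / δ)) / (1 + (2 - X) / X) = δ / 2 * X - α := by
  rw [one_add_creditFactor hX]
  field_simp

lemma certificatePrice_pos (hδ : 0 < δ) (hX : 2 * (α / δ) < X) : 0 < δ / 2 * X - α := by
  rw [mul_div_assoc', div_lt_iff₀ hδ] at hX
  linarith

lemma certificatePrice_eq_relative_excess (hα : α ≠ 0) (hδ : δ ≠ 0) :
    δ / 2 * X - α = α * (X - 2 * (α / δ)) / (2 * (α / δ)) := by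
  field_simp

lemma freeTrade_add_certificatePrice_div (hδ : δ ≠ 0) :
    α / δ + (δ / 2 * X - α) / δ = X / 2 := by
  field_simp
  ring

lemma creditFactor_mul_half (hX : X ≠ 0) : (2 - X) / X * (X / 2) = 1 - X / 2 := by
  field_simp

end CertificateScheme

theorem stmt_6_general (αA αB δ QAo XAo XbarA ηA πA : ℝ)
    (hA : 0 < αA) (hB : 0 < αB) (hδ : δ = αA + αB)
    (hQAo : QAo = αA / δ) (hXAo : XAo = 2 * QAo)
    (hXlo : XAo < XbarA) (hXhi : XbarA < 1)
    (hη : ηA = (2 - XbarA) / XbarA)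
    (hπ : πA = δ * (1 - (1 + ηA) * QAo) / (1 + ηA)) :
    1 < ηA ∧
    (πA = (δ / 2) * XbarA - αA ∧ 0 < πA) ∧
    πA = αA * (XbarA - XAo) / XAo ∧
    (QAo + πA / δ = XbarA / 2 ∧ 2 * QAo + 2 * πA / δ = XbarA) ∧
    ηA * (QAo + πA / δ) = 1 - QAo - πA / δ := by
  have hδ₀ : 0 < δ := hδ ▸ add_pos hA hB
  have hXbar₀ : 0 < XbarA := by
    have : 0 < XAo := by rw [hXAo, hQAo]; positivity
    linarith
  have hprice : πA = δ / 2 * XbarA - αA := by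
    rw [hπ, hη, hQAo, certificatePrice_eq hδ₀.ne' hXbar₀.ne']
  have hhalf : QAo + πA / δ = XbarA / 2 := by
    rw [hprice, hQAo, freeTrade_add_certificatePrice_div hδ₀.ne']
  refine ⟨hη ▸ one_lt_creditFactor hXbar₀ hXhi, ⟨hprice, ?_⟩, ?_, ⟨hhalf, by rw [mul_div_assoc]; linarith⟩, ?_⟩
  · rw [hprice]
    exact certificatePrice_pos hδ₀ (hQAo ▸ hXAo ▸ hXlo)
  · rw [hprice, hXAo, hQAo, certificatePrice_eq_relative_excess hA.ne' hδ₀.ne']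
  · rw [hhalf, show 1 - QAo - πA / δ = 1 - XbarA / 2 by linarith, hη]
    exact creditFactor_mul_half hXbar₀.ne'

/-- Properties of the TIC Agreement (Proposition 6): the chosen export credit factor
`η_A` exceeds one, the resulting certificate price is positive and implements
country A's strategic production target in a conditionally efficient manner. -/
theorem stmt_6 (αA αB δ QAo XAo XbarA ηA φA πA : ℝ)
    (hA : 0 < αA) (hB : 0 < αB) (hδ : δ = αA + αB)
    (hQAo : QAo = αA / δ) (hXAo : XAo = 2 * QAo)
    (hXlo : XAo < XbarA) (hXhi : XbarA < 1)
    (hη : ηA = (2 - XbarA) / XbarA)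
    (hφ : φA * ηA = 1)
    (hπ : πA = δ * (1 - (1 + ηA) * QAo) / (1 + ηA)) :
    1 < ηA ∧
    (πA = (δ / 2) * XbarA - αA ∧ 0 < πA) ∧
    πA = αA * (XbarA - XAo) / XAo ∧
    (QAo + πA / δ = XbarA / 2 ∧ 2 * QAo + 2 * πA / δ = XbarA) ∧
    ηA * (QAo + πA / δ) = 1 - QAo - πA / δ :=
  stmt_6_general αA αB δ QAo XAo XbarA ηA πA hA hB hδ hQAo hXAo hXlo hXhi hη hπ
end

section
/- Let δ > 0 and define g(η) = δ·(η² + η - 1)/(η² - 1) for η > 1. Then g is strictly decreasing on (1, ∞), and g(η) tends to +∞ as η tends to 1 from the right. -/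
open Filter Set Topology

/-!
Since `(η² + η - 1)/(η² - 1) = 1 + η/(η² - 1)`, monotonicity reduces to that of `η/(η² - 1)`,
where for `1 < a < b` the cross-multiplied difference `a(b² - 1) - b(a² - 1)` factors as
`(b - a)(ab + 1) > 0`. Near `1⁺` the numerator tends to `δ > 0` while the denominator tends to
`0` through positive values.
-/

lemma sq_sub_one_pos {η : ℝ} (hη : 1 < η) : 0 < η ^ 2 - 1 :=
  sub_pos.2 (one_lt_pow₀ hη two_ne_zero)

lemma strictAntiOn_div_sq_sub_one : StrictAntiOn (fun η : ℝ => η / (η ^ 2 - 1)) (Ioi 1) := by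
  intro a (ha : 1 < a) b (hb : 1 < b) hab
  rw [div_lt_div_iff₀ (sq_sub_one_pos hb) (sq_sub_one_pos ha)]
  nlinarith [mul_pos (sub_pos.2 hab) (by nlinarith : 0 < a * b + 1)]

lemma sq_add_sub_one_div_sq_sub_one {η : ℝ} (hη : η ^ 2 - 1 ≠ 0) :
    (η ^ 2 + η - 1) / (η ^ 2 - 1) = 1 + η / (η ^ 2 - 1) := by
  field_simp
  ring

lemma tendsto_sq_sub_one_nhdsGT_one :
    Tendsto (fun η : ℝ => η ^ 2 - 1) (𝓝[>] 1) (𝓝[>] 0) := by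
  refine tendsto_nhdsWithin_of_tendsto_nhds_of_eventually_within _ ?_ ?_
  · exact ((by fun_prop : Continuous fun η : ℝ => η ^ 2 - 1).tendsto' 1 0 (by norm_num)).mono_left
      nhdsWithin_le_nhds
  · filter_upwards [self_mem_nhdsWithin] with η (hη : 1 < η)
    exact sq_sub_one_pos hη

/-- The deviation threshold `γ_B^TIC(η) = δ(η² + η - 1)/(η² - 1)` is strictly
decreasing on `(1, ∞)` and tends to `+∞` as `η → 1⁺`. -/
theorem stmt_9 (δ : ℝ) (hδ : 0 < δ) :
    StrictAntiOn (fun η : ℝ => δ * (η ^ 2 + η - 1) / (η ^ 2 - 1)) (Set.Ioi 1) ∧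
    Tendsto (fun η : ℝ => δ * (η ^ 2 + η - 1) / (η ^ 2 - 1)) (nhdsWithin 1 (Set.Ioi 1))
      atTop := by
  constructor
  · intro a (ha : 1 < a) b (hb : 1 < b) hab
    have hlt := strictAntiOn_div_sq_sub_one ha hb hab
    simp only [mul_div_assoc, sq_add_sub_one_div_sq_sub_one (sq_sub_one_pos ha).ne',
      sq_add_sub_one_div_sq_sub_one (sq_sub_one_pos hb).ne']
    gcongr
  · have hnum : Tendsto (fun η : ℝ => δ * (η ^ 2 + η - 1)) (𝓝[>] 1) (𝓝 δ) :=
      ((by fun_prop : Continuous fun η : ℝ => δ * (η ^ 2 + η - 1)).tendsto' 1 δ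
        (by norm_num)).mono_left nhdsWithin_le_nhds
    exact (hnum.pos_mul_atTop hδ tendsto_sq_sub_one_nhdsGT_one.inv_tendsto_nhdsGT_zero).congr
      fun η => (div_eq_mul_inv _ _).symm
end

section
/- Let δ > 0, η ≥ 1, and Q_A^o, Q_B^o ∈ ℝ. Define π(β) = (δ·(Q_B^o - η·Q_A^o) + η·β)/(1 + η) and X_B(β) = 2·Q_B^o + (β - 2·π(β))/δ. Then for all β ∈ ℝ, X_B(β) = X_B(0) - β·(η - 1)/((1 + η)·δ). In particular, if η > 1 then X_B is strictly decreasing in β, so erecting a non-tariff barrier β > 0 strictly reduces country B's total production. -/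
/-- Under the TIC Agreement, a non-tariff barrier `β` by country B strictly reduces
B's total production when `η > 1` (Proposition 9, TIC part). -/
theorem stmt_12 (δ η QAo QBo : ℝ) (π XB : ℝ → ℝ)
    (hδ : 0 < δ) (hη : 1 ≤ η)
    (hπ : ∀ β, π β = (δ * (QBo - η * QAo) + η * β) / (1 + η))
    (hX : ∀ β, XB β = 2 * QBo + (β - 2 * π β) / δ) :
    (∀ β : ℝ, XB β = XB 0 - β * (η - 1) / ((1 + η) * δ)) ∧
    (1 < η → StrictAnti XB) := by
  have h1 : (0:ℝ) < 1 + η := by linarith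
  have key : ∀ β : ℝ, XB β = XB 0 - β * (η - 1) / ((1 + η) * δ) := by
    intro β
    rw [hX, hX, hπ, hπ]
    field_simp
    ring
  refine ⟨key, fun hη1 a b hab => ?_⟩
  rw [key a, key b]
  have hpos : 0 < (1 + η) * δ := by positivity
  have : a * (η - 1) / ((1 + η) * δ) < b * (η - 1) / ((1 + η) * δ) := by
    apply div_lt_div_of_pos_right (by nlinarith) hpos
  linarith
end

section
/- Let δ > 0 and let N, η be real numbers with N > η > 0. Then q* = (1 - η/N)/(η·N + η + N - η²) satisfies the first-order condition δ·(1 - η/N)·(1 - η·N·q*) - δ·(η + N)·q* = 0, the denominator N·(η+1) - η·(η-1) is strictly positive, and total exports Q = N·q* equal (N - η)/(N·(η + 1) - η·(η - 1)). -/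
/-! Since `η * N * (1 - η / N) = η * N - η ^ 2`, the first-order condition is affine in `q`:
it reads `δ * ((1 - η / N) - D * q) = 0` with `D = η * N + η + N - η ^ 2 = η * (N - η) + N + η > 0`. -/

lemma exportFOC_eq_mul_sub (δ N η q : ℝ) (hN : N ≠ 0) :
    δ * (1 - η / N) * (1 - η * N * q) - δ * (η + N) * q =
      δ * ((1 - η / N) - (η * N + η + N - η ^ 2) * q) := by
  field_simp
  ring

lemma exportDenom_eq (N η : ℝ) :
    η * N + η + N - η ^ 2 = N * (η + 1) - η * (η - 1) := by
  ring

lemma exportDenom_pos {N η : ℝ} (hη : 0 < η) (hN : η < N) :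
    0 < N * (η + 1) - η * (η - 1) := by
  nlinarith

theorem stmt_13_general (δ N η : ℝ) (hη : 0 < η) (hN : η < N) :
    let q : ℝ := (1 - η / N) / (η * N + η + N - η ^ 2)
    δ * (1 - η / N) * (1 - η * N * q) - δ * (η + N) * q = 0 ∧
    0 < N * (η + 1) - η * (η - 1) ∧
    N * q = (N - η) / (N * (η + 1) - η * (η - 1)) := by
  intro q
  have hN0 : N ≠ 0 := (hη.trans hN).ne'
  have hD := exportDenom_pos hη hN
  have hq : q = (1 - η / N) / (N * (η + 1) - η * (η - 1)) := by
    rw [← exportDenom_eq]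
  refine ⟨?_, hD, ?_⟩
  · rw [exportFOC_eq_mul_sub δ N η q hN0, exportDenom_eq, hq, mul_div_cancel₀ _ hD.ne',
      sub_self, mul_zero]
  · rw [hq, mul_div_assoc', mul_one_sub, mul_div_cancel₀ _ hN0]

/-- Symmetric oligopoly equilibrium exports under the TIC Agreement
(Proposition 10, interior case). -/
theorem stmt_13 (δ N η : ℝ) (hδ : 0 < δ) (hη : 0 < η) (hN : η < N) :
    let q : ℝ := (1 - η / N) / (η * N + η + N - η ^ 2)
    δ * (1 - η / N) * (1 - η * N * q) - δ * (η + N) * q = 0 ∧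
    0 < N * (η + 1) - η * (η - 1) ∧
    N * q = (N - η) / (N * (η + 1) - η * (η - 1)) :=
  stmt_13_general δ N η hη hN
end

section
/- Let η ≥ 1 and define Q(N) = (N - η)/(N·(η + 1) - η·(η - 1)) for N > η. Then: (i) Q(N) < 1/(1 + η) for every N > η, so the oligopoly allocation has Q_A^exp < Q_A^dom and is not conditionally efficient; and (ii) Q(N) tends to 1/(1 + η) as N → ∞, so that for δ > 0 and α_A ∈ ℝ the certificate price π(N) = δ·(1 - η·Q(N)) - α_A tends to δ/(1 + η) - α_A, the perfectly competitive outcome. -/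
open Filter Topology

lemma tendsto_add_div_atTop (a b : ℝ) : Tendsto (fun x : ℝ => a + b / x) atTop (𝓝 a) := by
  simpa using tendsto_const_nhds.add (tendsto_const_nhds.div_atTop (tendsto_id (α := ℝ)))

lemma tendsto_affine_div_affine_atTop (a b c d : ℝ) (hc : c ≠ 0) :
    Tendsto (fun x : ℝ => (a * x + b) / (c * x + d)) atTop (𝓝 (a / c)) := by
  refine ((tendsto_add_div_atTop a b).div (tendsto_add_div_atTop c d) hc).congr' ?_
  filter_upwards [eventually_ne_atTop 0] with x hx
  simp only [Pi.div_apply]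
  field_simp

lemma lt_one_sub_mul_of_lt_one_div {η x : ℝ} (hη : 0 < 1 + η) (hx : x < 1 / (1 + η)) :
    x < 1 - η * x := by
  rw [lt_div_iff₀ hη] at hx
  linarith

lemma oligopolyExports_lt_one_div {η N : ℝ} (hη : 0 < η) (hN : η < N) :
    (N - η) / (N * (η + 1) - η * (η - 1)) < 1 / (1 + η) := by
  have hden : 0 < N * (η + 1) - η * (η - 1) := by nlinarith
  rw [div_lt_div_iff₀ hden (by linarith)]
  -- after cross-multiplying, the inequality reduces to `η * (η - 1) < η * (η + 1)`
  nlinarith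

lemma tendsto_oligopolyExports_atTop {η : ℝ} (hη : η + 1 ≠ 0) :
    Tendsto (fun N : ℝ => (N - η) / (N * (η + 1) - η * (η - 1))) atTop
      (𝓝 (1 / (1 + η))) := by
  convert tendsto_affine_div_affine_atTop 1 (-η) (η + 1) (-(η * (η - 1))) hη
    using 2 with N
  · ring
  · rw [add_comm]

/-- Oligopoly exports under the TIC Agreement fall short of the conditionally
efficient level for any finite `N`, and converge to the perfectly competitive
outcome as `N → ∞`. -/
theorem stmt_15 (η : ℝ) (hη : 1 ≤ η) :
    (∀ N : ℝ, η < N →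
      (N - η) / (N * (η + 1) - η * (η - 1)) < 1 / (1 + η) ∧
      (N - η) / (N * (η + 1) - η * (η - 1))
        < 1 - η * ((N - η) / (N * (η + 1) - η * (η - 1)))) ∧
    Tendsto (fun N : ℝ => (N - η) / (N * (η + 1) - η * (η - 1))) atTop
      (nhds (1 / (1 + η))) ∧
    ∀ δ αA : ℝ, 0 < δ →
      Tendsto (fun N : ℝ => δ * (1 - η * ((N - η) / (N * (η + 1) - η * (η - 1)))) - αA)
        atTop (nhds (δ / (1 + η) - αA)) := by
  have hη0 : 0 < η := by linarith
  have hexports := tendsto_oligopolyExports_atTop (by linarith : 0 < η + 1).ne'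
  refine ⟨fun N hN => ?_, hexports, fun δ αA _ => ?_⟩
  · have hlt := oligopolyExports_lt_one_div hη0 hN
    exact ⟨hlt, lt_one_sub_mul_of_lt_one_div (by linarith) hlt⟩
  · convert (((hexports.const_mul η).const_sub 1).const_mul δ).sub_const αA using 2
    field_simp
    ring
end
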